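/- arXiv:2006.03741 — 3 statements merged into one kernel-verified Lean document; each statement's English description precedes it below -/
import Mathlib

section
/- Let d > 3 and let ν be the uniform (normalized rotation-invariant) probability measure on the unit sphere S^{d−1} ⊆ ℝ^d. Then for any x ∈ S^{d−1} and any 0 < r < 1, ν(B(x,r)) ≥ (1/(3√d)) · r^{d−1} · (1 − r²/4)^{(d−1)/2}. -/
/-!
Two rotation-invariant probability measures on the sphere give the same mass to every cap:
`∫ ν(B(y,r)) dμ(y)` and `∫ μ(B(z,r)) dν(z)` are both the `ν ⊗ μ`-measure of `{dist < r}`, and each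
integrand is constant on the sphere. So `ν(B(e₀,r))` may be computed for the radial projection `σ`
of normalised Lebesgue measure on the unit ball, where it is `vol(S)/ω_d` for the sector `S` of
half-angle `θ` with `cos θ = 1 - r²/2`, `sin θ = s = r√(1 - r²/4)`. A line parallel to `e₀` at
distance `u < s` from the axis meets `S` in a segment of length at least `1 - u/s`, so `vol(S)` is
at least the volume `ω_{d-1} s^{d-1}/d` of a cone of height `1` over a `(d-1)`-ball of radius `s`.
Finally `ω_{d-1}/(d ω_d) ≥ 1/(3√d)` follows from the log-convexity of `Γ`.
-/

open MeasureTheory Metric Real Module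
open scoped ENNReal

theorem Real.sq_Gamma_add_half_le {x : ℝ} (hx : 0 < x) :
    Gamma (x + 1 / 2) ^ 2 ≤ Gamma x * Gamma (x + 1) := by
  have hΓ₀ := (Gamma_pos_of_pos hx).le
  have hΓ₁ := (Gamma_pos_of_pos (by linarith : 0 < x + 1)).le
  have h := Gamma_mul_add_mul_le_rpow_Gamma_mul_rpow_Gamma hx (by linarith : 0 < x + 1)
    one_half_pos one_half_pos (add_halves 1)
  rw [show 1 / 2 * x + 1 / 2 * (x + 1) = x + 1 / 2 by ring, ← mul_rpow hΓ₀ hΓ₁,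
    ← sqrt_eq_rpow, le_sqrt (Gamma_pos_of_pos (by linarith)).le (mul_nonneg hΓ₀ hΓ₁)] at h
  exact h

theorem Real.sqrt_two_pi_mul_Gamma_add_half_le {x : ℝ} (hx : 0 < x) :
    √(2 * π * x) * Gamma (x + 1 / 2) ≤ 3 * Gamma (x + 1) := by
  have hΓ : 0 < Gamma (x + 1 / 2) := Gamma_pos_of_pos (by linarith)
  have hsq : 2 * π * x * Gamma (x + 1 / 2) ^ 2 ≤ (3 * Gamma (x + 1)) ^ 2 :=
    calc 2 * π * x * Gamma (x + 1 / 2) ^ 2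
        ≤ 2 * π * (x * Gamma x * Gamma (x + 1)) := by
          have := sq_Gamma_add_half_le hx
          have : 0 ≤ 2 * π * x := by positivity
          nlinarith
      _ = 2 * π * Gamma (x + 1) ^ 2 := by rw [← Gamma_add_one hx.ne']; ring
      _ ≤ (3 * Gamma (x + 1)) ^ 2 := by nlinarith [pi_le_four, sq_nonneg (Gamma (x + 1))]
  calc √(2 * π * x) * Gamma (x + 1 / 2)
      = √(2 * π * x * Gamma (x + 1 / 2) ^ 2) := by
        rw [sqrt_mul (by positivity) (Gamma (x + 1 / 2) ^ 2), sqrt_sq hΓ.le]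
    _ ≤ 3 * Gamma (x + 1) := sqrt_le_iff.2 ⟨by positivity, hsq⟩

/-- `ω_{n+1} √(n+1) ≤ 3 ω_n` for the unit-ball volumes `ω_k = √π ^ k / Γ(k/2 + 1)`. -/

theorem sqrt_pi_pow_succ_div_Gamma_mul_sqrt_le (n : ℕ) :
    √π ^ (n + 1) / Gamma ((n + 1 : ℕ) / 2 + 1) * √(n + 1) ≤ 3 * (√π ^ n / Gamma (n / 2 + 1)) := by
  have h := Real.sqrt_two_pi_mul_Gamma_add_half_le (x := (n + 1) / 2) (by positivity)
  rw [show 2 * π * ((n + 1) / 2) = π * (n + 1) by ring, sqrt_mul pi_nonneg,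
    show ((n : ℝ) + 1) / 2 + 1 / 2 = n / 2 + 1 by ring] at h
  have hΓn : 0 < Gamma (n / 2 + 1) := Gamma_pos_of_pos (by positivity)
  have hΓ : 0 < Gamma ((n + 1 : ℕ) / 2 + 1) := Gamma_pos_of_pos (by positivity)
  push_cast at hΓ ⊢
  rw [div_mul_eq_mul_div, div_le_iff₀ hΓ]
  calc √π ^ (n + 1) * √(n + 1)
        = √π ^ n / Gamma (n / 2 + 1) * (√π * √(n + 1) * Gamma (n / 2 + 1)) := by
          field_simp; ring
    _ ≤ √π ^ n / Gamma (n / 2 + 1) * (3 * Gamma ((n + 1) / 2 + 1)) := by gcongr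
    _ = _ := by ring

theorem lintegral_Ioo_ofReal_mul_pow (n : ℕ) {s : ℝ} (hs : 0 ≤ s) :
    ∫⁻ t in Set.Ioo (0 : ℝ) 1, ENNReal.ofReal ((s * t) ^ n) = ENNReal.ofReal (s ^ n / (n + 1)) := by
  have hint : IntegrableOn (fun t : ℝ => (s * t) ^ n) (Set.Ioc 0 1) :=
    (continuous_const.mul continuous_id).pow n |>.integrableOn_Icc.mono_set Set.Ioc_subset_Icc_self
  rw [Measure.restrict_congr_set Ioo_ae_eq_Ioc, ← ofReal_integral_eq_lintegral_ofReal hint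
    (ae_restrict_of_forall_mem measurableSet_Ioc fun t ht => pow_nonneg (mul_nonneg hs ht.1.le) n),
    ← intervalIntegral.integral_of_le zero_le_one]
  simp [mul_pow, integral_pow, div_eq_mul_inv]

theorem lintegral_ofReal_one_sub_norm_div {E : Type*} [NormedAddCommGroup E] [NormedSpace ℝ E]
    [MeasurableSpace E] [BorelSpace E] [FiniteDimensional ℝ E] (μ : Measure E)
    [μ.IsAddHaarMeasure] {s : ℝ} (hs : 0 < s) :
    ∫⁻ x, ENNReal.ofReal (1 - ‖x‖ / s) ∂μ =
      ENNReal.ofReal (s ^ finrank ℝ E / (finrank ℝ E + 1)) * μ (ball 0 1) := by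
  set T : Set (E × ℝ) := {p | ‖p.1‖ / s < p.2 ∧ p.2 < 1}
  have hT : MeasurableSet T :=
    (measurableSet_lt (by fun_prop) measurable_snd).inter
      (measurableSet_lt measurable_snd measurable_const)
  have hslice : ∀ t, μ ((fun x => (x, t)) ⁻¹' T) =
      (Set.Ioo 0 1).indicator
        (fun t => ENNReal.ofReal ((s * t) ^ finrank ℝ E) * μ (ball 0 1)) t := by
    intro t
    by_cases ht : t ∈ Set.Ioo (0 : ℝ) 1
    · rw [Set.indicator_of_mem ht, ← Measure.addHaar_ball_of_pos μ 0 (mul_pos hs ht.1)]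
      congr 1
      ext x
      simp [T, ht.2, div_lt_iff₀ hs, mul_comm]
    · rw [Set.indicator_of_notMem ht]
      convert measure_empty (μ := μ)
      ext x
      simp only [T, Set.mem_preimage, Set.mem_ofPred_eq, Set.mem_empty_iff_false, iff_false]
      exact fun h => ht ⟨(by positivity : 0 ≤ ‖x‖ / s).trans_lt h.1, h.2⟩
  calc ∫⁻ x, ENNReal.ofReal (1 - ‖x‖ / s) ∂μ
      = ∫⁻ x, volume (Prod.mk x ⁻¹' T) ∂μ := by
        congr 1; ext x; exact (Real.volume_Ioo).symm
    _ = ∫⁻ t, μ ((fun x => (x, t)) ⁻¹' T) := by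
        rw [← Measure.prod_apply hT, Measure.prod_apply_symm hT]
    _ = ∫⁻ t in Set.Ioo 0 1, ENNReal.ofReal ((s * t) ^ finrank ℝ E) * μ (ball 0 1) := by
        simp_rw [hslice]; exact lintegral_indicator measurableSet_Ioo _
    _ = _ := by
        rw [lintegral_mul_const _ (by fun_prop), lintegral_Ioo_ofReal_mul_pow _ hs.le]

theorem one_sub_div_le_sqrt_one_sub_sq_sub {c s u : ℝ} (hs : 0 < s) (hc : 0 ≤ c)
    (hcs : c ^ 2 + s ^ 2 = 1) (hu : 0 ≤ u) (hus : u ≤ s) :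
    1 - u / s ≤ √(1 - u ^ 2) - c * u / s := by
  have hc1 : c ≤ 1 := by nlinarith
  suffices h : (s - (1 - c) * u) / s ≤ √(1 - u ^ 2) by
    have : (s - (1 - c) * u) / s = 1 - u / s + c * u / s := by field_simp; ring
    linarith
  rcases le_or_gt (s - (1 - c) * u) 0 with h | h
  · exact (div_nonpos_of_nonpos_of_nonneg h hs.le).trans (sqrt_nonneg _)
  · rw [le_sqrt' (by positivity), div_pow, div_le_iff₀ (by positivity)]
    nlinarith [mul_nonneg (mul_nonneg hu (sub_nonneg.2 hc1)) (sub_nonneg.2 hus)]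

theorem ofReal_one_sub_div_le_volume {c s u : ℝ} (hs : 0 < s) (hc : 0 ≤ c)
    (hcs : c ^ 2 + s ^ 2 = 1) (hu : 0 ≤ u) :
    ENNReal.ofReal (1 - u / s) ≤
      volume {t : ℝ | 0 < t ∧ c ^ 2 * (t ^ 2 + u ^ 2) < t ^ 2 ∧ t ^ 2 + u ^ 2 < 1} := by
  rcases le_or_gt s u with hsu | hus
  · rw [ENNReal.ofReal_eq_zero.2 (by rw [sub_nonpos, le_div_iff₀ hs]; linarith)]
    exact zero_le
  have hsub : Set.Ioo (c * u / s) √(1 - u ^ 2) ⊆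
      {t : ℝ | 0 < t ∧ c ^ 2 * (t ^ 2 + u ^ 2) < t ^ 2 ∧ t ^ 2 + u ^ 2 < 1} := by
    rintro t ⟨hct, htu⟩
    have ht : 0 < t := (by positivity : 0 ≤ c * u / s).trans_lt hct
    have hcu : c * u < s * t := by rwa [div_lt_iff₀' hs] at hct
    refine ⟨ht, ?_, ?_⟩
    · nlinarith [mul_nonneg hc hu]
    · have := (lt_sqrt ht.le).1 htu
      linarith
  calc ENNReal.ofReal (1 - u / s)
      ≤ ENNReal.ofReal (√(1 - u ^ 2) - c * u / s) :=
        ENNReal.ofReal_le_ofReal (one_sub_div_le_sqrt_one_sub_sq_sub hs hc hcs hu hus.le)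
    _ = volume (Set.Ioo (c * u / s) √(1 - u ^ 2)) := (Real.volume_Ioo).symm
    _ ≤ _ := measure_mono hsub

theorem eq_of_ae_measure_ball_eq {X : Type*} [PseudoMetricSpace X]
    [MeasurableSpace X] [OpensMeasurableSpace X] [SecondCountableTopology X]
    {μ ν : Measure X} [IsProbabilityMeasure μ] [IsProbabilityMeasure ν] {r : ℝ} {a b : ℝ≥0∞}
    (hμ : ∀ᵐ y ∂ν, μ (ball y r) = a) (hν : ∀ᵐ y ∂μ, ν (ball y r) = b) : a = b := by
  have hS : MeasurableSet {p : X × X | dist p.2 p.1 < r} :=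
    measurableSet_lt (by fun_prop) measurable_const
  calc a = ∫⁻ y, μ (ball y r) ∂ν := by rw [lintegral_congr_ae hμ]; simp
    _ = (ν.prod μ) {p | dist p.2 p.1 < r} := (Measure.prod_apply hS).symm
    _ = ∫⁻ y, ν (ball y r) ∂μ := by
        rw [Measure.prod_apply_symm hS]
        exact lintegral_congr fun y => congrArg ν (Set.ext fun z => by simp [dist_comm])
    _ = b := by rw [lintegral_congr_ae hν]; simp

section RotationInvariant

variable {E : Type*} [NormedAddCommGroup E] [InnerProductSpace ℝ E] [MeasurableSpace E]
  [BorelSpace E]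

def IsRotationInvariant (μ : Measure E) : Prop :=
  ∀ R : E ≃ₗᵢ[ℝ] E, μ.map R = μ

theorem IsRotationInvariant.measure_ball_eq_of_norm_eq {μ : Measure E}
    (hμ : IsRotationInvariant μ) {a b : E} (hab : ‖a‖ = ‖b‖) (r : ℝ) :
    μ (ball a r) = μ (ball b r) := by
  set R := (ℝ ∙ (a - b))ᗮ.reflection
  have hpre : R ⁻¹' ball b r = ball a r := by
    rw [LinearIsometryEquiv.preimage_ball, ← Submodule.reflection_sub hab,
      Submodule.reflection_symm, Submodule.reflection_reflection]
  rw [← hpre, ← Measure.map_apply R.continuous.measurable measurableSet_ball, hμ R]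

theorem IsRotationInvariant.measure_ball_eq [SecondCountableTopology E]
    {μ ν : Measure E} [IsProbabilityMeasure μ] [IsProbabilityMeasure ν]
    (hμ : IsRotationInvariant μ) (hν : IsRotationInvariant ν) {ρ : ℝ}
    (hμρ : μ (sphere 0 ρ) = 1) (hνρ : ν (sphere 0 ρ) = 1) {x : E} (hx : ‖x‖ = ρ) (r : ℝ) :
    μ (ball x r) = ν (ball x r) := by
  have hS : MeasurableSet (sphere (0 : E) ρ) := isClosed_sphere.measurableSet
  have hμx : ∀ᵐ y ∂μ, ‖y‖ = ‖x‖ := by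
    filter_upwards [(ae_mem_iff_measure_eq hS.nullMeasurableSet).2 (by rw [hμρ, measure_univ])]
      with y hy
    rwa [hx, ← mem_sphere_zero_iff_norm]
  have hνx : ∀ᵐ y ∂ν, ‖y‖ = ‖x‖ := by
    filter_upwards [(ae_mem_iff_measure_eq hS.nullMeasurableSet).2 (by rw [hνρ, measure_univ])]
      with y hy
    rwa [hx, ← mem_sphere_zero_iff_norm]
  exact eq_of_ae_measure_ball_eq (hνx.mono fun y hy => hμ.measure_ball_eq_of_norm_eq hy r)
    (hμx.mono fun y hy => hν.measure_ball_eq_of_norm_eq hy r)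

section UniformSphereMeasure

variable [FiniteDimensional ℝ E]

variable (E) in
noncomputable def uniformSphereMeasure : Measure E :=
  (volume (ball (0 : E) 1))⁻¹ • (volume.restrict (ball (0 : E) 1 \ {0})).map fun z => ‖z‖⁻¹ • z

theorem uniformSphereMeasure_apply {s : Set E} (hs : MeasurableSet s) :
    uniformSphereMeasure E s =
      (volume (ball (0 : E) 1))⁻¹ * volume ((fun z => ‖z‖⁻¹ • z) ⁻¹' s ∩ (ball 0 1 \ {0})) := by
  have hf : Measurable fun z : E => ‖z‖⁻¹ • z := by fun_prop
  rw [uniformSphereMeasure, Measure.smul_apply, Measure.map_apply hf hs,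
    Measure.restrict_apply (hf hs), smul_eq_mul]

theorem uniformSphereMeasure_eq_one_of_sphere_subset [Nontrivial E] {s : Set E}
    (hs : MeasurableSet s) (hsub : sphere 0 1 ⊆ s) : uniformSphereMeasure E s = 1 := by
  have hU : ball (0 : E) 1 \ {0} ⊆ (fun z => ‖z‖⁻¹ • z) ⁻¹' s := fun z hz =>
    hsub <| by simp [norm_smul, inv_mul_cancel₀ (norm_ne_zero_iff.2 hz.2)]
  rw [uniformSphereMeasure_apply hs, Set.inter_eq_right.2 hU,
    measure_sdiff_null (measure_singleton 0),
    ENNReal.inv_mul_cancel (measure_ball_pos _ _ one_pos).ne' measure_ball_lt_top.ne]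

instance [Nontrivial E] : IsProbabilityMeasure (uniformSphereMeasure E) :=
  ⟨uniformSphereMeasure_eq_one_of_sphere_subset MeasurableSet.univ (Set.subset_univ _)⟩

theorem isRotationInvariant_uniformSphereMeasure :
    IsRotationInvariant (uniformSphereMeasure E) := by
  intro R
  have hR : (fun z => ‖z‖⁻¹ • z) ∘ R = R ∘ fun z => ‖z‖⁻¹ • z := by
    ext z; simp
  have hU : R ⁻¹' (ball (0 : E) 1 \ {0}) = ball 0 1 \ {0} := by
    ext z; simp
  have hRU := (R.measurePreserving.restrict_preimage (s := ball (0 : E) 1 \ {0})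
    (measurableSet_ball.diff (measurableSet_singleton 0))).map_eq
  rw [hU] at hRU
  rw [uniformSphereMeasure, Measure.map_smul, Measure.map_map R.continuous.measurable (by fun_prop),
    ← hR, ← Measure.map_map (by fun_prop) R.continuous.measurable, hRU]

end UniformSphereMeasure

end RotationInvariant

namespace EuclideanSpace

noncomputable def finSuccMeasurableEquiv (n : ℕ) :
    EuclideanSpace ℝ (Fin (n + 1)) ≃ᵐ ℝ × EuclideanSpace ℝ (Fin n) :=
  (MeasurableEquiv.toLp 2 _).symm.trans <| (MeasurableEquiv.piFinSuccAbove (fun _ => ℝ) 0).trans <|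
    (MeasurableEquiv.refl ℝ).prodCongr (MeasurableEquiv.toLp 2 _)

theorem measurePreserving_finSuccMeasurableEquiv (n : ℕ) :
    MeasurePreserving (finSuccMeasurableEquiv n) :=
  (volume_preserving_symm_measurableEquiv_toLp _).trans <|
    (volume_preserving_piFinSuccAbove (fun _ => ℝ) 0).trans <|
      (MeasurePreserving.id volume).prod (PiLp.volume_preserving_toLp _)

theorem finSuccMeasurableEquiv_fst {n : ℕ} (z : EuclideanSpace ℝ (Fin (n + 1))) :
    (finSuccMeasurableEquiv n z).1 = z 0 := rfl

theorem norm_sq_eq_finSuccMeasurableEquiv {n : ℕ} (z : EuclideanSpace ℝ (Fin (n + 1))) :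
    ‖z‖ ^ 2 = z 0 ^ 2 + ‖(finSuccMeasurableEquiv n z).2‖ ^ 2 := by
  simp only [EuclideanSpace.norm_sq_eq, Fin.sum_univ_succ, Real.norm_eq_abs, sq_abs]
  rfl

end EuclideanSpace

/-- For `c ≥ 0`: the points of the open unit ball whose angle `α` with `e₀` has `cos α > c`. -/
def sector (n : ℕ) (c : ℝ) : Set (EuclideanSpace ℝ (Fin (n + 1))) :=
  {z | 0 < z 0 ∧ c ^ 2 * ‖z‖ ^ 2 < z 0 ^ 2 ∧ ‖z‖ ^ 2 < 1}

theorem ofReal_mul_volume_ball_le_volume_sector {n : ℕ} {c s : ℝ} (hs : 0 < s) (hc : 0 ≤ c)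
    (hcs : c ^ 2 + s ^ 2 = 1) :
    ENNReal.ofReal (s ^ n / (n + 1)) * volume (ball (0 : EuclideanSpace ℝ (Fin n)) 1) ≤
      volume (sector n c) := by
  set C : Set (ℝ × EuclideanSpace ℝ (Fin n)) :=
    {p | 0 < p.1 ∧ c ^ 2 * (p.1 ^ 2 + ‖p.2‖ ^ 2) < p.1 ^ 2 ∧ p.1 ^ 2 + ‖p.2‖ ^ 2 < 1}
  have hC : MeasurableSet C := by measurability
  have hpre : sector n c = EuclideanSpace.finSuccMeasurableEquiv n ⁻¹' C := by
    ext z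
    simp only [sector, C, Set.mem_preimage, Set.mem_ofPred_eq,
      EuclideanSpace.finSuccMeasurableEquiv_fst, EuclideanSpace.norm_sq_eq_finSuccMeasurableEquiv]
  have hcone := lintegral_ofReal_one_sub_norm_div (volume : Measure (EuclideanSpace ℝ (Fin n))) hs
  rw [finrank_euclideanSpace_fin] at hcone
  rw [hpre, (EuclideanSpace.measurePreserving_finSuccMeasurableEquiv n).measure_preimage
    hC.nullMeasurableSet, ← hcone, Measure.volume_eq_prod, Measure.prod_apply_symm hC]
  exact lintegral_mono fun w => ofReal_one_sub_div_le_volume hs hc hcs (norm_nonneg w)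

theorem sector_subset_preimage_ball {n : ℕ} {r : ℝ} (hr0 : 0 < r) :
    sector n (1 - r ^ 2 / 2) ⊆
      (fun z => ‖z‖⁻¹ • z) ⁻¹' ball (EuclideanSpace.single 0 (1 : ℝ)) r ∩ (ball 0 1 \ {0}) := by
  rintro z ⟨hz0, hzc, hz1⟩
  have hz : z ≠ 0 := by rintro rfl; simp at hz0
  have hnz : 0 < ‖z‖ := norm_pos_iff.2 hz
  refine ⟨?_, mem_ball_zero_iff.2 (by nlinarith [norm_nonneg z]), hz⟩
  have hlt : 1 - r ^ 2 / 2 < ‖z‖⁻¹ * z 0 := by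
    have h : ((1 - r ^ 2 / 2) * ‖z‖) ^ 2 < z 0 ^ 2 := by rw [mul_pow]; exact hzc
    rw [inv_mul_eq_div, lt_div_iff₀ hnz]
    exact (abs_lt_of_sq_lt_sq' h hz0.le).2
  have hsq : ‖‖z‖⁻¹ • z - EuclideanSpace.single 0 1‖ ^ 2 < r ^ 2 := by
    rw [norm_sub_sq_real, norm_smul, norm_inv, norm_norm, inv_mul_cancel₀ hnz.ne',
      EuclideanSpace.inner_single_right, PiLp.norm_single]
    simp only [PiLp.smul_apply, smul_eq_mul, conj_trivial, one_mul, norm_one]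
    linarith only [hlt]
  rw [Set.mem_preimage, mem_ball_iff_norm]
  exact lt_of_pow_lt_pow_left₀ 2 hr0.le hsq

theorem ofReal_le_uniformSphereMeasure_ball_single {n : ℕ} (hn : n ≠ 0) {r : ℝ} (hr0 : 0 < r)
    (hr1 : r < 1) :
    ENNReal.ofReal ((r * √(1 - r ^ 2 / 4)) ^ n / (3 * √(n + 1))) ≤
      uniformSphereMeasure (EuclideanSpace ℝ (Fin (n + 1)))
        (ball (EuclideanSpace.single 0 (1 : ℝ)) r) := by
  set s := r * √(1 - r ^ 2 / 4)
  have h4 : 0 < 1 - r ^ 2 / 4 := by nlinarith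
  have hs : 0 < s := by positivity
  have hc : 0 ≤ 1 - r ^ 2 / 2 := by nlinarith
  have hcs : (1 - r ^ 2 / 2) ^ 2 + s ^ 2 = 1 := by
    rw [mul_pow, sq_sqrt h4.le]; ring
  have : Nonempty (Fin n) := ⟨⟨0, Nat.pos_of_ne_zero hn⟩⟩
  rw [uniformSphereMeasure_apply measurableSet_ball]
  refine le_trans ?_ (mul_le_mul_right ((ofReal_mul_volume_ball_le_volume_sector hs hc hcs).trans
    (measure_mono (sector_subset_preimage_ball hr0))) _)
  simp only [EuclideanSpace.volume_ball, ENNReal.ofReal_one, one_pow, one_mul, Fintype.card_fin]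
  set A := √π ^ (n + 1) / Gamma ((n + 1 : ℕ) / 2 + 1)
  set B := √π ^ n / Gamma (n / 2 + 1)
  have hA : 0 < A := by
    have := Gamma_pos_of_pos (by positivity : (0 : ℝ) < (n + 1 : ℕ) / 2 + 1); positivity
  have hq2 : √(n + 1 : ℝ) ^ 2 = n + 1 := sq_sqrt (by positivity)
  rw [← ENNReal.ofReal_inv_of_pos hA, ← ENNReal.ofReal_mul (by positivity),
    ← ENNReal.ofReal_mul (by positivity)]
  refine ENNReal.ofReal_le_ofReal ?_
  calc s ^ n / (3 * √(n + 1)) = A⁻¹ * (s ^ n / (n + 1) * (A * √(n + 1) / 3)) := by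
        field_simp
        exact hq2.symm
    _ ≤ A⁻¹ * (s ^ n / (n + 1) * B) := by
        gcongr
        linarith [sqrt_pi_pow_succ_div_Gamma_mul_sqrt_le n]

/-- Lemma 6(a) of the paper.  For `d > 3`, if `ν` is the uniform
(rotation-invariant) probability measure on the unit sphere `S^{d−1} ⊆ ℝ^d`, then for any
unit vector `x` and `0 < r < 1`,
`ν(B(x,r)) ≥ (1/(3√d)) · r^{d−1} · (1 − r²/4)^{(d−1)/2}`. -/
theorem stmt12 (d : ℕ) (hd : 3 < d)
    (ν : Measure (EuclideanSpace ℝ (Fin d))) [IsProbabilityMeasure ν]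
    (hνsph : ν (sphere (0 : EuclideanSpace ℝ (Fin d)) 1) = 1)
    (hνinv : ∀ R : EuclideanSpace ℝ (Fin d) ≃ₗᵢ[ℝ] EuclideanSpace ℝ (Fin d),
      Measure.map R ν = ν)
    (x : EuclideanSpace ℝ (Fin d)) (hx : ‖x‖ = 1)
    (r : ℝ) (hr0 : 0 < r) (hr1 : r < 1) :
    ENNReal.ofReal
        ((1 / (3 * Real.sqrt d)) * r ^ ((d : ℝ) - 1) *
          (1 - r ^ 2 / 4) ^ (((d : ℝ) - 1) / 2))
      ≤ ν (ball x r) := by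
  obtain ⟨n, rfl⟩ : ∃ n, d = n + 1 := ⟨d - 1, by omega⟩
  have hσ := isRotationInvariant_uniformSphereMeasure (E := EuclideanSpace ℝ (Fin (n + 1)))
  rw [IsRotationInvariant.measure_ball_eq hνinv hσ hνsph
      (uniformSphereMeasure_eq_one_of_sphere_subset isClosed_sphere.measurableSet subset_rfl) hx,
    hσ.measure_ball_eq_of_norm_eq (b := EuclideanSpace.single 0 1) (by simp [hx]),
    rpow_div_two_eq_sqrt _ (by nlinarith), mul_assoc, ← mul_rpow hr0.le (sqrt_nonneg _),
    Nat.cast_succ, add_sub_cancel_right, rpow_natCast, one_div_mul_eq_div]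
  exact ofReal_le_uniformSphereMeasure_ball_single (by omega) hr0 hr1
end

section
/- Let x, x', θ ∈ ℝ^d and let u ∈ ℝ^d be a unit vector with θ = x + Δu for some 0 ≤ Δ < ρ. If ‖x' − (x − ρu)‖ ≥ ρ (i.e., x' does not lie in the open ball of radius ρ centered at x − ρu), then ‖θ − x'‖² ≤ Δ² + ‖x' − x‖² · (ρ + Δ)/ρ. Consequently, for a set M ⊆ ℝ^d avoiding the open ball B(x − ρu, ρ), every point of M within distance r of x lies within distance √(Δ² + r²(ρ+Δ)/ρ) of θ. -/
/-!
Put `p = x - ρ u`, so that `p`, `x`, `θ = x + Δ u` lie on a line with `x` between them at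
distances `ρ` and `Δ`. Stewart's theorem for a point `y` reads
`ρ ‖θ - y‖² + Δ ‖y - p‖² = (ρ + Δ) (‖y - x‖² + ρ Δ)`,
and the hypothesis `‖y - p‖ ≥ ρ` turns it into `ρ ‖θ - y‖² ≤ ρ Δ² + (ρ + Δ) ‖y - x‖²`.
-/

open Metric

section Stewart

variable {E : Type*} [NormedAddCommGroup E] [InnerProductSpace ℝ E]

theorem mul_norm_add_smul_sub_sq_add_mul_norm_sub_sub_smul_sq {u : E} (hu : ‖u‖ = 1)
    (x y : E) (Δ ρ : ℝ) :
    ρ * ‖x + Δ • u - y‖ ^ 2 + Δ * ‖y - (x - ρ • u)‖ ^ 2 =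
      (ρ + Δ) * (‖y - x‖ ^ 2 + ρ * Δ) := by
  have hθ : x + Δ • u - y = Δ • u - (y - x) := by abel
  have hp : y - (x - ρ • u) = (y - x) + ρ • u := by abel
  rw [hθ, hp, norm_sub_sq_real, norm_add_sq_real, norm_smul, norm_smul, hu,
    real_inner_smul_left, real_inner_smul_right, real_inner_comm, Real.norm_eq_abs,
    Real.norm_eq_abs, mul_one, mul_one, sq_abs, sq_abs]
  ring

theorem norm_add_smul_sub_sq_le_of_le_norm_sub {u : E} (hu : ‖u‖ = 1) {x y : E} {Δ ρ : ℝ}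
    (hΔ : 0 ≤ Δ) (hρ : 0 < ρ) (hy : ρ ≤ ‖y - (x - ρ • u)‖) :
    ‖x + Δ • u - y‖ ^ 2 ≤ Δ ^ 2 + ‖y - x‖ ^ 2 * (ρ + Δ) / ρ := by
  have hstewart := mul_norm_add_smul_sub_sq_add_mul_norm_sub_sub_smul_sq hu x y Δ ρ
  have hfar : Δ * ρ ^ 2 ≤ Δ * ‖y - (x - ρ • u)‖ ^ 2 := by gcongr
  calc ‖x + Δ • u - y‖ ^ 2 = ρ * ‖x + Δ • u - y‖ ^ 2 / ρ := by field_simp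
    _ ≤ (ρ * Δ ^ 2 + ‖y - x‖ ^ 2 * (ρ + Δ)) / ρ := by gcongr; linarith
    _ = Δ ^ 2 + ‖y - x‖ ^ 2 * (ρ + Δ) / ρ := by field_simp

theorem norm_add_smul_sub_le_sqrt_of_notMem_ball {u : E} (hu : ‖u‖ = 1) {x y : E}
    {Δ ρ r : ℝ} (hΔ : 0 ≤ Δ) (hρ : 0 < ρ) (hy : y ∉ ball (x - ρ • u) ρ)
    (hyr : ‖y - x‖ ≤ r) :
    ‖x + Δ • u - y‖ ≤ Real.sqrt (Δ ^ 2 + r ^ 2 * (ρ + Δ) / ρ) := by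
  rw [mem_ball, dist_eq_norm, not_lt] at hy
  apply Real.le_sqrt_of_sq_le
  calc ‖x + Δ • u - y‖ ^ 2 ≤ Δ ^ 2 + ‖y - x‖ ^ 2 * (ρ + Δ) / ρ :=
        norm_add_smul_sub_sq_le_of_le_norm_sub hu hΔ hρ hy
    _ ≤ Δ ^ 2 + r ^ 2 * (ρ + Δ) / ρ := by gcongr

end Stewart

/-- first geometric step in the proof of Lemma 4 of the paper.
Let `θ = x + Δ u` with `u` a unit vector and `0 ≤ Δ < ρ`.  If `x'` avoids the open ball of
radius `ρ` centered at `x − ρ u`, then `‖θ − x'‖² ≤ Δ² + ‖x' − x‖² (ρ + Δ)/ρ`.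
Consequently, for any set `M` avoiding that ball, every point of `M` within distance `r`
of `x` lies within distance `√(Δ² + r²(ρ+Δ)/ρ)` of `θ`. -/
theorem stmt15 (d : ℕ) (x x' θ u : EuclideanSpace ℝ (Fin d)) (Δ ρ : ℝ)
    (hu : ‖u‖ = 1) (hΔ0 : 0 ≤ Δ) (hΔρ : Δ < ρ) (hθ : θ = x + Δ • u)
    (hx' : ρ ≤ ‖x' - (x - ρ • u)‖) :
    ‖θ - x'‖ ^ 2 ≤ Δ ^ 2 + ‖x' - x‖ ^ 2 * (ρ + Δ) / ρ ∧
    ∀ (M : Set (EuclideanSpace ℝ (Fin d))) (r : ℝ),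
      (∀ y ∈ M, y ∉ ball (x - ρ • u) ρ) →
      ∀ y ∈ M, ‖y - x‖ ≤ r → ‖θ - y‖ ≤ Real.sqrt (Δ ^ 2 + r ^ 2 * (ρ + Δ) / ρ) := by
  subst hθ
  have hρ : 0 < ρ := hΔ0.trans_lt hΔρ
  exact ⟨norm_add_smul_sub_sq_le_of_le_norm_sub hu hΔ0 hρ hx',
    fun M r hM y hy hyr => norm_add_smul_sub_le_sqrt_of_notMem_ball hu hΔ0 hρ (hM y hy) hyr⟩
end

section
/- Let x, x', θ ∈ ℝ^d and let u ∈ ℝ^d be a unit vector with θ = x + Δu for some 0 ≤ Δ < ρ. If ‖x' − (x + ρu)‖ ≥ ρ (i.e., x' does not lie in the open ball of radius ρ centered at x + ρu), then ‖x − x'‖² ≤ (ρ/(ρ − Δ)) · (‖θ − x'‖² − Δ²). Consequently, for a set M ⊆ ℝ^d avoiding the open ball B(x + ρu, ρ), every point of M within distance r' of θ lies within distance √((ρ/(ρ−Δ))((r')² − Δ²)) of x. -/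
open Metric
open scoped RealInnerProductSpace

section TangentBall

variable {E : Type*} [NormedAddCommGroup E] [InnerProductSpace ℝ E]

lemma norm_add_smul_unit_sq (v u : E) (t : ℝ) (hu : ‖u‖ = 1) :
    ‖v + t • u‖ ^ 2 = ‖v‖ ^ 2 + 2 * t * ⟪v, u⟫ + t ^ 2 := by
  rw [norm_add_sq_real, real_inner_smul_right, norm_smul, Real.norm_eq_abs, hu, mul_one,
    sq_abs]
  ring

/-- With `v = x - y` and `a = ⟪v, u⟫`, the hypothesis reads `‖v‖² + 2ρa ≥ 0`, and the claim is
`Δ (‖v‖² + 2ρa) ≥ 0` after clearing the denominator. -/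
lemma norm_sub_sq_le_of_le_norm_sub_center {x y u : E} {Δ ρ : ℝ} (hu : ‖u‖ = 1)
    (hΔ : 0 ≤ Δ) (hΔρ : Δ < ρ) (hy : ρ ≤ ‖y - (x + ρ • u)‖) :
    ‖x - y‖ ^ 2 ≤ ρ / (ρ - Δ) * (‖x + Δ • u - y‖ ^ 2 - Δ ^ 2) := by
  have hρ : 0 < ρ := hΔ.trans_lt hΔρ
  have h_far : ρ ^ 2 ≤ ‖x - y‖ ^ 2 + 2 * ρ * ⟪x - y, u⟫ + ρ ^ 2 := by
    rw [← norm_add_smul_unit_sq _ _ _ hu, ← norm_neg, neg_add', neg_sub, sub_sub]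
    exact pow_le_pow_left₀ hρ.le hy 2
  have h_near : ‖x + Δ • u - y‖ ^ 2 = ‖x - y‖ ^ 2 + 2 * Δ * ⟪x - y, u⟫ + Δ ^ 2 := by
    rw [← norm_add_smul_unit_sq _ _ _ hu, sub_add_eq_add_sub]
  rw [h_near, div_mul_eq_mul_div, le_div_iff₀ (sub_pos.mpr hΔρ)]
  nlinarith [mul_nonneg hΔ (sub_nonneg.mpr h_far)]

lemma norm_sub_le_sqrt_of_notMem_ball {x y u : E} {Δ ρ r : ℝ} (hu : ‖u‖ = 1)
    (hΔ : 0 ≤ Δ) (hΔρ : Δ < ρ) (hy : y ∉ ball (x + ρ • u) ρ) (hr : ‖x + Δ • u - y‖ ≤ r) :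
    ‖x - y‖ ≤ Real.sqrt (ρ / (ρ - Δ) * (r ^ 2 - Δ ^ 2)) := by
  have hy' : ρ ≤ ‖y - (x + ρ • u)‖ := by rwa [mem_ball, dist_eq_norm, not_lt] at hy
  have hscale : 0 ≤ ρ / (ρ - Δ) := div_nonneg (hΔ.trans hΔρ.le) (sub_nonneg.mpr hΔρ.le)
  refine Real.le_sqrt_of_sq_le ?_
  calc ‖x - y‖ ^ 2 ≤ ρ / (ρ - Δ) * (‖x + Δ • u - y‖ ^ 2 - Δ ^ 2) :=
        norm_sub_sq_le_of_le_norm_sub_center hu hΔ hΔρ hy'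
    _ ≤ ρ / (ρ - Δ) * (r ^ 2 - Δ ^ 2) := by gcongr

end TangentBall

/-- second geometric step in the proof of Lemma 4 of the paper.
Let `θ = x + Δ u` with `u` a unit vector and `0 ≤ Δ < ρ`.  If `x'` avoids the open ball of
radius `ρ` centered at `x + ρ u`, then `‖x − x'‖² ≤ (ρ/(ρ−Δ)) (‖θ − x'‖² − Δ²)`.
Consequently, for any set `M` avoiding that ball, every point of `M` within distance `r'`
of `θ` lies within distance `√((ρ/(ρ−Δ))((r')² − Δ²))` of `x`. -/
theorem stmt16 (d : ℕ) (x x' θ u : EuclideanSpace ℝ (Fin d)) (Δ ρ : ℝ)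
    (hu : ‖u‖ = 1) (hΔ0 : 0 ≤ Δ) (hΔρ : Δ < ρ) (hθ : θ = x + Δ • u)
    (hx' : ρ ≤ ‖x' - (x + ρ • u)‖) :
    ‖x - x'‖ ^ 2 ≤ ρ / (ρ - Δ) * (‖θ - x'‖ ^ 2 - Δ ^ 2) ∧
    ∀ (M : Set (EuclideanSpace ℝ (Fin d))) (r' : ℝ),
      (∀ y ∈ M, y ∉ ball (x + ρ • u) ρ) →
      ∀ y ∈ M, ‖θ - y‖ ≤ r' →
        ‖x - y‖ ≤ Real.sqrt (ρ / (ρ - Δ) * (r' ^ 2 - Δ ^ 2)) := by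
  subst hθ
  exact ⟨norm_sub_sq_le_of_le_norm_sub_center hu hΔ0 hΔρ hx',
    fun _ _ hM y hy hr => norm_sub_le_sqrt_of_notMem_ball hu hΔ0 hΔρ (hM y hy) hr⟩
end
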